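/- arXiv:2311.03949 — 2 statements merged into one kernel-verified Lean document; each statement's English description precedes it below -/
import Mathlib

section
/- Multi-qubit QSP characterization: Let d ≥ 2 and let P_0, …, P_{d−1} be complex polynomials. There exist unitaries A_0, …, A_n ∈ U(d) such that A_n W A_{n−1} W ⋯ W A_0 e_0 = (P_0(z), …, P_{d−1}(z))ᵀ for all z on the unit circle, where W = diag(1,…,1, z,…,z) has at least one 1 and at least one z on the diagonal, if and only if (i) deg P_x ≤ n for all x and (ii) ∑_x |P_x(z)|² = 1 for all z with |z| = 1. -/
/-!
Necessity: the QSP product is a matrix of polynomials of degree at most `n` in `z`, and it is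
unitary on the unit circle, so its action on a unit vector has unit norm there.

Sufficiency, by induction on `n`: if `∑ₓ |Pₓ(z)|² = 1` on the circle and `deg Pₓ ≤ n + 1`, then
the vector `u` of constant coefficients is orthogonal to the vector `v` of top coefficients.
Choose a unitary `U` sending `u` onto a coordinate where `W` is `1` and `v` onto a coordinate
where `W` is `z`. Then `U P` has no top coefficient on the `1`-block and no constant term on the
`z`-block, hence `U P = W(z) Q` with `deg Q ≤ n`, and `Q` again has unit norm on the circle.
-/

open Matrix Polynomial

/-- The QSP product `A n * W z * A (n-1) * W z * ⋯ * W z * A 0`. -/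
noncomputable def qspProd {d : ℕ} (W : ℂ → Matrix (Fin d) (Fin d) ℂ) :
    (n : ℕ) → (Fin (n + 1) → Matrix (Fin d) (Fin d) ℂ) → ℂ → Matrix (Fin d) (Fin d) ℂ
  | 0, A, _ => A 0
  | n + 1, A, z => A (Fin.last (n + 1)) * W z * qspProd W n (fun i => A i.castSucc) z

theorem Polynomial.eq_of_forall_norm_eq_one_eval_eq {p q : ℂ[X]}
    (h : ∀ z : ℂ, ‖z‖ = 1 → p.eval z = q.eval z) : p = q := by
  have hinf : (Metric.sphere (0 : ℂ) 1).Infinite :=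
    (isConnected_sphere (by simp [Complex.rank_real_complex]) 0 zero_le_one).isPreconnected
      |>.infinite_of_nontrivial ⟨1, by simp, -1, by simp, by norm_num⟩
  exact eq_of_infinite_eval_eq p q (hinf.mono fun z hz => h z (by simpa using hz))

theorem Polynomial.eval_reflect_map_conj {p : ℂ[X]} {m : ℕ} (hp : p.natDegree ≤ m) {z : ℂ}
    (hz : ‖z‖ = 1) :
    (reflect m (p.map (starRingEnd ℂ))).eval z = z ^ m * starRingEnd ℂ (p.eval z) := by
  have hzz : z * starRingEnd ℂ z = 1 := by
    rw [Complex.mul_conj, Complex.normSq_eq_norm_sq, hz, one_pow, Complex.ofReal_one]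
  -- on the circle `z⁻¹ = conj z`
  let _ : Invertible (starRingEnd ℂ z) := ⟨z, hzz, by rw [mul_comm, hzz]⟩
  have h := eval₂_reflect_mul_pow (RingHom.id ℂ) (starRingEnd ℂ z) m (p.map (starRingEnd ℂ))
    ((natDegree_map_le (f := starRingEnd ℂ)).trans hp)
  rw [← eval, ← eval, eval_map, eval₂_at_apply] at h
  rw [← h, mul_left_comm, ← mul_pow, hzz, one_pow, mul_one]
  rfl

/- On the circle `z ^ m * conj (Pₓ z)` is the polynomial `reflect m (conj Pₓ)`, so
`∑ₓ Pₓ * reflect m (conj Pₓ) = c * X ^ m`, whose constant term vanishes. -/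
theorem sum_conj_coeff_zero_mul_coeff_eq_zero {ι : Type*} [Fintype ι] {m : ℕ} (hm : m ≠ 0)
    (P : ι → ℂ[X]) (hdeg : ∀ x, (P x).natDegree ≤ m) (c : ℝ)
    (hsum : ∀ z : ℂ, ‖z‖ = 1 → ∑ x, ‖(P x).eval z‖ ^ 2 = c) :
    ∑ x, starRingEnd ℂ ((P x).coeff 0) * (P x).coeff m = 0 := by
  have hprod : ∑ x, P x * reflect m ((P x).map (starRingEnd ℂ)) = C (c : ℂ) * X ^ m := by
    refine eq_of_forall_norm_eq_one_eval_eq fun z hz => ?_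
    simp only [eval_finsetSum, eval_mul, eval_reflect_map_conj (hdeg _) hz, eval_C, eval_pow,
      eval_X, ← hsum z hz]
    push_cast
    rw [Finset.sum_mul]
    refine Finset.sum_congr rfl fun x _ => ?_
    rw [← Complex.mul_conj']
    ring
  have h0 := congrArg (coeff · 0) hprod
  simp only [finsetSum_coeff, mul_coeff_zero, coeff_reflect, revAt_le (Nat.zero_le m),
    Nat.sub_zero, coeff_map, coeff_X_pow, Ne.symm hm, if_false, mul_zero] at h0
  simpa using congrArg (starRingEnd ℂ) h0

theorem OrthonormalBasis.exists_eq_norm_smul_of_pairwise_inner_eq_zero {𝕜 E ι : Type*} [RCLike 𝕜]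
    [NormedAddCommGroup E] [InnerProductSpace 𝕜 E] [FiniteDimensional 𝕜 E] [Fintype ι]
    (hcard : Module.finrank 𝕜 E = Fintype.card ι) {w : ι → E}
    (hw : Pairwise fun i j => inner 𝕜 (w i) (w j) = 0) :
    ∃ b : OrthonormalBasis ι 𝕜 E, ∀ i, w i = (‖w i‖ : 𝕜) • b i := by
  classical
  have hon : Orthonormal 𝕜 ({i | w i ≠ 0}.domRestrict fun i => (‖w i‖ : 𝕜)⁻¹ • w i) := by
    rw [orthonormal_iff_ite]
    rintro ⟨i, hi⟩ ⟨j, hj⟩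
    change inner 𝕜 ((‖w i‖ : 𝕜)⁻¹ • w i) ((‖w j‖ : 𝕜)⁻¹ • w j) = _
    by_cases hij : i = j
    · subst hij
      rw [inner_self_eq_norm_sq_to_K, norm_smul_inv_norm hi]
      simp
    · simp [hij, inner_smul_left, inner_smul_right, hw hij]
  obtain ⟨b, hb⟩ := hon.exists_orthonormalBasis_extension_of_card_eq hcard
  refine ⟨b, fun i => ?_⟩
  by_cases hi : w i = 0
  · simp [hi]
  · rw [hb i hi, smul_inv_smul₀ (by simpa using hi)]

namespace Matrix

section UnitaryGroup

variable {ι : Type*} [Fintype ι] [DecidableEq ι]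

theorem sum_norm_sq_mulVec_of_mem_unitaryGroup {𝕜 : Type*} [RCLike 𝕜] {U : Matrix ι ι 𝕜}
    (hU : U ∈ unitaryGroup ι 𝕜) (v : ι → 𝕜) : ∑ i, ‖(U *ᵥ v) i‖ ^ 2 = ∑ i, ‖v i‖ ^ 2 := by
  have hdot : ∀ w : ι → 𝕜, ((∑ i, ‖w i‖ ^ 2 : ℝ) : 𝕜) = star w ⬝ᵥ w := fun w => by
    simp [dotProduct, RCLike.conj_mul]
  apply RCLike.ofReal_injective (K := 𝕜)
  rw [hdot, hdot, star_mulVec, dotProduct_mulVec, vecMul_vecMul, ← star_eq_conjTranspose,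
    mem_unitaryGroup_iff'.mp hU, vecMul_one]

theorem exists_mem_unitaryGroup_mulVec_eq_single {w : ι → EuclideanSpace ℂ ι}
    (hw : Pairwise fun i j => inner ℂ (w i) (w j) = 0) :
    ∃ U ∈ unitaryGroup ι ℂ, ∀ i, U *ᵥ w i = Pi.single i (‖w i‖ : ℂ) := by
  obtain ⟨b, hb⟩ := OrthonormalBasis.exists_eq_norm_smul_of_pairwise_inner_eq_zero (by simp) hw
  refine ⟨b.toBasis.toMatrix (EuclideanSpace.basisFun ι ℂ),
    b.toMatrix_orthonormalBasis_mem_unitary _, fun i => ?_⟩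
  have hrepr : b.toBasis.repr (w i) = Finsupp.single i (‖w i‖ : ℂ) := by
    conv_lhs => rw [hb i]
    rw [LinearEquiv.map_smul, ← b.coe_toBasis, Module.Basis.repr_self, Finsupp.smul_single,
      smul_eq_mul, mul_one]
    rfl
  have hfun : ⇑((EuclideanSpace.basisFun ι ℂ).toBasis.repr (w i)) = w i := by
    ext j; simp
  have h := (EuclideanSpace.basisFun ι ℂ).toBasis.toMatrix_mulVec_repr b.toBasis (w i)
  rw [hrepr, hfun, Finsupp.single_eq_pi_single] at h
  simpa using h

theorem exists_mem_unitaryGroup_mulVec_eq_single_one {v : ι → ℂ} (hv : ∑ i, ‖v i‖ ^ 2 = 1)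
    (i₀ : ι) : ∃ U ∈ unitaryGroup ι ℂ, U *ᵥ v = Pi.single i₀ 1 := by
  obtain ⟨U, hU, hUv⟩ := exists_mem_unitaryGroup_mulVec_eq_single
    (w := Pi.single i₀ (WithLp.toLp 2 v)) fun i j hij => by
      rcases eq_or_ne i i₀ with rfl | hi
      · simp [Pi.single_eq_of_ne' hij]
      · simp [Pi.single_eq_of_ne hi]
  have hnorm : ‖WithLp.toLp 2 v‖ = 1 := by
    rw [← pow_eq_one_iff_of_nonneg (norm_nonneg _) two_ne_zero, EuclideanSpace.norm_sq_eq]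
    exact hv
  exact ⟨U, hU, by simpa [hnorm] using hUv i₀⟩

theorem exists_mem_unitaryGroup_mulVec_eq {e c : ι → ℂ} (he : ∑ i, ‖e i‖ ^ 2 = 1)
    (hc : ∑ i, ‖c i‖ ^ 2 = 1) : ∃ A ∈ unitaryGroup ι ℂ, A *ᵥ e = c := by
  obtain ⟨i₀⟩ : Nonempty ι := by
    by_contra h
    simp [not_nonempty_iff.mp h] at he
  obtain ⟨Ue, hUe, hUee⟩ := exists_mem_unitaryGroup_mulVec_eq_single_one he i₀
  obtain ⟨Uc, hUc, hUcc⟩ := exists_mem_unitaryGroup_mulVec_eq_single_one hc i₀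
  refine ⟨star Uc * Ue, mul_mem (Unitary.star_mem hUc) hUe, ?_⟩
  rw [← mulVec_mulVec, hUee, ← hUcc, mulVec_mulVec, mem_unitaryGroup_iff'.mp hUc, one_mulVec]

end UnitaryGroup

end Matrix

section PolynomialVector

variable {R ι κ : Type*} [CommSemiring R] [Fintype ι] (M : Matrix κ ι R) (P : ι → R[X])

theorem Polynomial.natDegree_mulVec_map_C_le {m : ℕ} (hP : ∀ y, (P y).natDegree ≤ m) (x : κ) :
    ((M.map C *ᵥ P) x).natDegree ≤ m :=
  natDegree_sum_le_of_forall_le _ _ fun y _ => natDegree_C_mul_le _ _ |>.trans (hP y)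

theorem Polynomial.coeff_mulVec_map_C (k : ℕ) (x : κ) :
    ((M.map C *ᵥ P) x).coeff k = (M *ᵥ fun y => (P y).coeff k) x := by
  simp [mulVec, dotProduct, finsetSum_coeff]

theorem Polynomial.eval_mulVec_map_C (z : R) (x : κ) :
    ((M.map C *ᵥ P) x).eval z = (M *ᵥ fun y => (P y).eval z) x := by
  simp [mulVec, dotProduct, eval_finsetSum]

end PolynomialVector

section QSP

variable {d : ℕ}

theorem qspProd_mem_unitaryGroup {W : ℂ → Matrix (Fin d) (Fin d) ℂ} {z : ℂ}
    (hW : W z ∈ unitaryGroup (Fin d) ℂ) :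
    ∀ {n : ℕ} {A : Fin (n + 1) → Matrix (Fin d) (Fin d) ℂ},
      (∀ i, A i ∈ unitaryGroup (Fin d) ℂ) → qspProd W n A z ∈ unitaryGroup (Fin d) ℂ
  | 0, _, hA => hA 0
  | _ + 1, _, hA => mul_mem (mul_mem (hA _) hW) (qspProd_mem_unitaryGroup hW fun _ => hA _)

theorem qspProd_snoc (W : ℂ → Matrix (Fin d) (Fin d) ℂ) (n : ℕ)
    (A : Fin (n + 1) → Matrix (Fin d) (Fin d) ℂ) (B : Matrix (Fin d) (Fin d) ℂ) (z : ℂ) :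
    qspProd W (n + 1) (Fin.snoc A B) z = B * W z * qspProd W n A z := by
  simp [qspProd]

theorem exists_qspProd_eq_map_eval {W : ℂ → Matrix (Fin d) (Fin d) ℂ}
    {Wp : Matrix (Fin d) (Fin d) ℂ[X]} (hW : ∀ z, W z = Wp.map (eval z))
    (hWp : ∀ i j, (Wp i j).natDegree ≤ 1) :
    ∀ (n : ℕ) (A : Fin (n + 1) → Matrix (Fin d) (Fin d) ℂ),
      ∃ M : Matrix (Fin d) (Fin d) ℂ[X], (∀ i j, (M i j).natDegree ≤ n) ∧
        ∀ z, qspProd W n A z = M.map (eval z)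
  | 0, A => ⟨(A 0).map C, fun i j => by simp, fun z => by ext; simp [qspProd]⟩
  | n + 1, A => by
    obtain ⟨M, hM, hMz⟩ := exists_qspProd_eq_map_eval hW hWp n (fun i => A i.castSucc)
    refine ⟨(A (Fin.last (n + 1))).map C * Wp * M, fun i j => ?_, fun z => ?_⟩
    · rw [mul_apply]
      refine (natDegree_sum_le_of_forall_le _ _ fun l _ =>
        natDegree_mul_le_of_le ?_ (hM l j)).trans_eq (add_comm 1 n)
      rw [mul_apply]
      exact natDegree_sum_le_of_forall_le _ _ fun k _ =>
        (natDegree_C_mul_le _ _).trans (hWp k l)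
    · rw [qspProd, hMz, hW, ← coe_evalRingHom, Matrix.map_mul, Matrix.map_mul]
      congr 2
      ext; simp

variable (p : Fin d → Prop) [DecidablePred p]

def signalOp (z : ℂ) : Matrix (Fin d) (Fin d) ℂ :=
  diagonal fun i => if p i then 1 else z

noncomputable def signalPoly : Matrix (Fin d) (Fin d) ℂ[X] :=
  diagonal fun i => if p i then 1 else X

theorem signalOp_eq_map_eval (z : ℂ) : signalOp p z = (signalPoly p).map (eval z) := by
  rw [signalPoly, diagonal_map (by simp)]
  simp only [signalOp, apply_ite (eval z), eval_one, eval_X]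

theorem natDegree_signalPoly_le (i j : Fin d) : (signalPoly p i j).natDegree ≤ 1 := by
  rw [signalPoly, diagonal_apply]
  split_ifs <;> simp

theorem signalOp_mem_unitaryGroup {z : ℂ} (hz : ‖z‖ = 1) :
    signalOp p z ∈ unitaryGroup (Fin d) ℂ := by
  rw [mem_unitaryGroup_iff', signalOp, star_eq_conjTranspose, diagonal_conjTranspose,
    diagonal_mul_diagonal, ← diagonal_one]
  congr 1
  ext i
  by_cases h : p i <;> simp [h, Complex.conj_mul', hz]

theorem natDegree_le_and_sum_norm_sq_eq_one_of_qspProd {n : ℕ} {e : Fin d → ℂ}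
    (he : ∑ i, ‖e i‖ ^ 2 = 1) {A : Fin (n + 1) → Matrix (Fin d) (Fin d) ℂ}
    (hA : ∀ i, A i ∈ unitaryGroup (Fin d) ℂ) {P : Fin d → ℂ[X]}
    (hP : ∀ z : ℂ, ‖z‖ = 1 → qspProd (signalOp p) n A z *ᵥ e = fun x => (P x).eval z) :
    (∀ x, (P x).natDegree ≤ n) ∧ ∀ z : ℂ, ‖z‖ = 1 → ∑ x, ‖(P x).eval z‖ ^ 2 = 1 := by
  obtain ⟨M, hM, hMz⟩ :=
    exists_qspProd_eq_map_eval (signalOp_eq_map_eval p) (natDegree_signalPoly_le p) n A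
  have hPM : ∀ x, P x = (M *ᵥ fun j => C (e j)) x := fun x =>
    eq_of_forall_norm_eq_one_eval_eq fun z hz => by
      rw [← congrFun (hP z hz) x, hMz, ← coe_evalRingHom, RingHom.map_mulVec]
      simp [Function.comp_def]
  refine ⟨fun x => ?_, fun z hz => ?_⟩
  · rw [hPM x, mulVec, dotProduct]
    exact natDegree_sum_le_of_forall_le _ _ fun j _ => (natDegree_mul_C_le _ _).trans (hM x j)
  · simp_rw [← congrFun (hP z hz)]
    rw [sum_norm_sq_mulVec_of_mem_unitaryGroup
      (qspProd_mem_unitaryGroup (signalOp_mem_unitaryGroup p hz) hA), he]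

theorem exists_signalOp_mulVec_eq_eval {m : ℕ} {T : Fin d → ℂ[X]}
    (hdeg : ∀ x, (T x).natDegree ≤ m + 1) (hone : ∀ x, p x → (T x).coeff (m + 1) = 0)
    (hz : ∀ x, ¬p x → (T x).coeff 0 = 0) :
    ∃ Q : Fin d → ℂ[X], (∀ x, (Q x).natDegree ≤ m) ∧
      ∀ z, signalOp p z *ᵥ (fun x => (Q x).eval z) = fun x => (T x).eval z := by
  refine ⟨fun x => if p x then T x else divX (T x), fun x => ?_, fun z => ?_⟩
  · dsimp only
    split_ifs with hx
    · rw [natDegree_le_iff_coeff_eq_zero]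
      intro N hN
      rcases (Nat.succ_le_of_lt hN).eq_or_lt with rfl | hlt
      · exact hone x hx
      · exact coeff_eq_zero_of_natDegree_lt ((hdeg x).trans_lt hlt)
    · rw [natDegree_divX_eq_natDegree_tsub_one]
      exact Nat.sub_le_of_le_add (hdeg x)
  · ext x
    rw [signalOp, mulVec_diagonal]
    by_cases hx : p x
    · simp [hx]
    · conv_rhs => rw [← divX_mul_X_add (T x), hz x hx]
      simp [hx, mul_comm]

theorem exists_mem_unitaryGroup_signalOp_mulVec_eq_eval {a b : Fin d} (ha : p a) (hb : ¬p b)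
    {m : ℕ} {P : Fin d → ℂ[X]} (hdeg : ∀ x, (P x).natDegree ≤ m + 1)
    (hsum : ∀ z : ℂ, ‖z‖ = 1 → ∑ x, ‖(P x).eval z‖ ^ 2 = 1) :
    ∃ B ∈ unitaryGroup (Fin d) ℂ, ∃ Q : Fin d → ℂ[X], (∀ x, (Q x).natDegree ≤ m) ∧
      ∀ z, (B * signalOp p z) *ᵥ (fun x => (Q x).eval z) = fun x => (P x).eval z := by
  have hab : a ≠ b := fun h => hb (h ▸ ha)
  set u : EuclideanSpace ℂ (Fin d) := WithLp.toLp 2 fun x => (P x).coeff 0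
  set v : EuclideanSpace ℂ (Fin d) := WithLp.toLp 2 fun x => (P x).coeff (m + 1)
  have huv : inner ℂ u v = 0 := by
    simpa [u, v, PiLp.inner_apply, mul_comm] using
      sum_conj_coeff_zero_mul_coeff_eq_zero m.succ_ne_zero P hdeg 1 hsum
  have hvu : inner ℂ v u = 0 := inner_eq_zero_symm.mp huv
  obtain ⟨U, hU, hUw⟩ := exists_mem_unitaryGroup_mulVec_eq_single
    (w := Pi.single a u + Pi.single b v) fun i j hij => by
      simp only [Pi.add_apply, Pi.single_apply]
      split_ifs <;> simp_all
  have hUu : ∀ x ≠ a, (U *ᵥ fun y => (P y).coeff 0) x = 0 := fun x hx => by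
    simpa [hab, Pi.single_eq_of_ne hx] using congrFun (hUw a) x
  have hUv : ∀ x ≠ b, (U *ᵥ fun y => (P y).coeff (m + 1)) x = 0 := fun x hx => by
    simpa [hab.symm, Pi.single_eq_of_ne hx] using congrFun (hUw b) x
  obtain ⟨Q, hQ, hQz⟩ := exists_signalOp_mulVec_eq_eval p (T := U.map C *ᵥ P)
    (natDegree_mulVec_map_C_le U P hdeg)
    (fun x hx => by rw [coeff_mulVec_map_C, hUv x fun h => hb (h ▸ hx)])
    (fun x hx => by rw [coeff_mulVec_map_C, hUu x fun h => hx (h ▸ ha)])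
  refine ⟨star U, Unitary.star_mem hU, Q, hQ, fun z => ?_⟩
  rw [← mulVec_mulVec, hQz]
  simp_rw [eval_mulVec_map_C]
  rw [mulVec_mulVec, mem_unitaryGroup_iff'.mp hU, one_mulVec]

theorem exists_qspProd_mulVec_eq_eval {a b : Fin d} (ha : p a) (hb : ¬p b) {e : Fin d → ℂ}
    (he : ∑ i, ‖e i‖ ^ 2 = 1) :
    ∀ {n : ℕ} {P : Fin d → ℂ[X]}, (∀ x, (P x).natDegree ≤ n) →
      (∀ z : ℂ, ‖z‖ = 1 → ∑ x, ‖(P x).eval z‖ ^ 2 = 1) →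
      ∃ A : Fin (n + 1) → Matrix (Fin d) (Fin d) ℂ, (∀ i, A i ∈ unitaryGroup (Fin d) ℂ) ∧
        ∀ z : ℂ, ‖z‖ = 1 → qspProd (signalOp p) n A z *ᵥ e = fun x => (P x).eval z
  | 0, P, hdeg, hsum => by
    have hconst : ∀ x, P x = C ((P x).coeff 0) := fun x => eq_C_of_natDegree_le_zero (hdeg x)
    have hc : ∑ x, ‖(P x).coeff 0‖ ^ 2 = 1 := by
      convert hsum 1 (by simp) using 3 with x
      rw [hconst x, eval_C, coeff_C_zero]
    obtain ⟨A, hA, hAe⟩ := exists_mem_unitaryGroup_mulVec_eq he hc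
    refine ⟨fun _ => A, fun _ => hA, fun z _ => ?_⟩
    rw [qspProd, hAe]
    ext x
    conv_rhs => rw [hconst x, eval_C]
  | n + 1, P, hdeg, hsum => by
    obtain ⟨B, hB, Q, hQ, hQz⟩ :=
      exists_mem_unitaryGroup_signalOp_mulVec_eq_eval p ha hb hdeg hsum
    have hQsum : ∀ z : ℂ, ‖z‖ = 1 → ∑ x, ‖(Q x).eval z‖ ^ 2 = 1 := fun z hz => by
      rw [← sum_norm_sq_mulVec_of_mem_unitaryGroup
        (mul_mem hB (signalOp_mem_unitaryGroup p hz)), hQz, hsum z hz]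
    obtain ⟨A, hA, hAz⟩ := exists_qspProd_mulVec_eq_eval ha hb he hQ hQsum
    refine ⟨Fin.snoc A B, fun i => Fin.lastCases (by simpa using hB)
      (fun j => by simpa using hA j) i, fun z hz => ?_⟩
    rw [qspProd_snoc, ← mulVec_mulVec, hAz z hz, hQz]

theorem qspProd_mulVec_eq_eval_iff {a b : Fin d} (ha : p a) (hb : ¬p b) {e : Fin d → ℂ}
    (he : ∑ i, ‖e i‖ ^ 2 = 1) (n : ℕ) (P : Fin d → ℂ[X]) :
    (∃ A : Fin (n + 1) → Matrix (Fin d) (Fin d) ℂ, (∀ i, A i ∈ unitaryGroup (Fin d) ℂ) ∧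
        ∀ z : ℂ, ‖z‖ = 1 → qspProd (signalOp p) n A z *ᵥ e = fun x => (P x).eval z) ↔
      (∀ x, (P x).natDegree ≤ n) ∧ ∀ z : ℂ, ‖z‖ = 1 → ∑ x, ‖(P x).eval z‖ ^ 2 = 1 :=
  ⟨fun ⟨_, hA, hP⟩ => natDegree_le_and_sum_norm_sq_eq_one_of_qspProd p he hA hP,
    fun ⟨hdeg, hsum⟩ => exists_qspProd_mulVec_eq_eval p ha hb he hdeg hsum⟩

end QSP

theorem multi_qubit_qsp_analytic_general (d : ℕ) (k : ℕ) (hk1 : 1 ≤ k)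
    (hk2 : k ≤ d - 1) (n : ℕ) (P : Fin d → Polynomial ℂ) :
    (∃ A : Fin (n + 1) → Matrix (Fin d) (Fin d) ℂ,
        (∀ i, A i ∈ Matrix.unitaryGroup (Fin d) ℂ) ∧
        (∀ z : ℂ, ‖z‖ = 1 →
          (qspProd (fun z => Matrix.diagonal (fun i : Fin d => if (i : ℕ) < k then 1 else z))
              n A z).mulVec (fun i : Fin d => if (i : ℕ) = 0 then 1 else 0) =
            fun x : Fin d => (P x).eval z)) ↔
      ((∀ x : Fin d, (P x).natDegree ≤ n) ∧
        ∀ z : ℂ, ‖z‖ = 1 →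
          ∑ x : Fin d, ‖(P x).eval z‖ ^ 2 = 1) := by
  have hd : 0 < d := by omega
  have he : ∑ i : Fin d, ‖if (i : ℕ) = 0 then (1 : ℂ) else 0‖ ^ 2 = 1 := by
    rw [Finset.sum_eq_single ⟨0, hd⟩] <;> simp +contextual [Fin.ext_iff]
  exact qspProd_mulVec_eq_eval_iff (fun i : Fin d => (i : ℕ) < k) (a := ⟨0, hd⟩)
    (b := ⟨d - 1, by omega⟩) hk1 (Nat.not_lt.mpr hk2) he n P

theorem multi_qubit_qsp_analytic (d : ℕ) (hd : 2 ≤ d) (k : ℕ) (hk1 : 1 ≤ k)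
    (hk2 : k ≤ d - 1) (n : ℕ) (P : Fin d → Polynomial ℂ) :
    (∃ A : Fin (n + 1) → Matrix (Fin d) (Fin d) ℂ,
        (∀ i, A i ∈ Matrix.unitaryGroup (Fin d) ℂ) ∧
        (∀ z : ℂ, ‖z‖ = 1 →
          (qspProd (fun z => Matrix.diagonal (fun i : Fin d => if (i : ℕ) < k then 1 else z))
              n A z).mulVec (fun i : Fin d => if (i : ℕ) = 0 then 1 else 0) =
            fun x : Fin d => (P x).eval z)) ↔
      ((∀ x : Fin d, (P x).natDegree ≤ n) ∧
        ∀ z : ℂ, ‖z‖ = 1 →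
          ∑ x : Fin d, ‖(P x).eval z‖ ^ 2 = 1) :=
  multi_qubit_qsp_analytic_general d k hk1 hk2 n P
end

section
/- Fejér–Riesz theorem: Let R(z) = ∑_{k=−n}^{n} r_k z^k be a Laurent polynomial that is real and nonnegative for all z on the unit circle. Then there exists a polynomial w(z) of degree at most n such that R(z) = |w(z)|² for all z with |z| = 1. -/
/-!
Write `R(z) = z⁻ⁿ P(z)` with `deg P ≤ 2n`. Since `R` is real on the unit circle, where
`conj z = z⁻¹`, the polynomial `P` is self-reciprocal: `P(z) = z²ⁿ conj (P (conj z)⁻¹)`. Hence a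
root `ρ ≠ 0` of `P` comes with the root `(conj ρ)⁻¹`, and a root on the circle is a minimum of
`θ ↦ R(e^{iθ}) ≥ 0`, so it is at least double. Either way `(z - ρ)(z - (conj ρ)⁻¹)` divides `P`,
and on the circle this factor is `|z - ρ|²` times `-z / conj ρ`, so dividing it out leaves a
nonnegative Laurent polynomial of degree `n - 1`. Induction on `n` then builds `w` one linear
factor `z - ρ` at a time, a root of `P` at `0` only lowers `n`, and for `n = 0` the constant
`R ≥ 0` is `|√R|²`.
-/

open Polynomial Complex ComplexConjugate Finset Filter Topology
open scoped ComplexOrder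

noncomputable def shiftedPoly (n : ℕ) (r : ℤ → ℂ) : ℂ[X] :=
  ∑ j ∈ range (2 * n + 1), C (r (j - n)) * X ^ j

lemma eval_shiftedPoly (n : ℕ) (r : ℤ → ℂ) (z : ℂ) :
    (shiftedPoly n r).eval z = ∑ j ∈ range (2 * n + 1), r (j - n) * z ^ j := by
  simp [shiftedPoly, eval_finsetSum]

lemma natDegree_shiftedPoly_le (n : ℕ) (r : ℤ → ℂ) : (shiftedPoly n r).natDegree ≤ 2 * n :=
  natDegree_sum_le_of_forall_le _ _ fun _ hj =>
    (natDegree_C_mul_X_pow_le _ _).trans (Nat.lt_succ_iff.mp (mem_range.mp hj))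

lemma sum_Icc_mul_zpow_eq_eval_shiftedPoly (n : ℕ) (r : ℤ → ℂ) {z : ℂ} (hz : z ≠ 0) :
    ∑ k ∈ Icc (-(n : ℤ)) n, r k * z ^ k = z ^ (-(n : ℤ)) * (shiftedPoly n r).eval z := by
  have htoNat : ∀ k ∈ Icc (-(n : ℤ)) n, ((k + n).toNat : ℤ) = k + n := fun k hk =>
    Int.toNat_of_nonneg (by rw [mem_Icc] at hk; omega)
  rw [eval_shiftedPoly, mul_sum]
  refine sum_nbij' (fun k => (k + n).toNat) (fun j => (j : ℤ) - n) ?_ ?_ ?_ (by simp) ?_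
  · intro k hk; simp only [mem_Icc, mem_range] at hk ⊢; omega
  · intro j hj; simp only [mem_Icc, mem_range] at hj ⊢; omega
  · intro k hk; simp only [htoNat k hk, add_sub_cancel_right]
  · intro k hk
    rw [← zpow_natCast, htoNat k hk, add_sub_cancel_right, zpow_add₀ hz, zpow_neg, zpow_natCast]
    field_simp

lemma ne_zero_of_norm_eq_one {z : ℂ} (hz : ‖z‖ = 1) : z ≠ 0 :=
  norm_ne_zero_iff.mp (by simp [hz])

lemma exists_exp_mul_I_eq {z : ℂ} (hz : ‖z‖ = 1) : ∃ θ : ℝ, exp (θ * I) = z :=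
  ⟨arg z, by simpa [hz] using norm_mul_exp_arg_mul_I z⟩

lemma infinite_unitCircle : {z : ℂ | ‖z‖ = 1}.Infinite := by
  have h := (isPreconnected_sphere (E := ℂ) (by simp) 0 1).infinite_of_nontrivial
    ⟨1, by simp, -1, by simp, by norm_num⟩
  simpa [Metric.sphere] using h

lemma eval_map_conj (P : ℂ[X]) (z : ℂ) : (P.map conj).eval z = conj (P.eval (conj z)) := by
  rw [eval_map, ← eval₂_hom, conj_conj]

lemma eval_reflect_eq_pow_mul_eval_inv {N : ℕ} {P : ℂ[X]} (hP : P.natDegree ≤ N) {z : ℂ}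
    (hz : z ≠ 0) : (reflect N P).eval z = z ^ N * P.eval z⁻¹ := by
  let := invertibleOfNonzero (inv_ne_zero hz)
  have h := eval₂_reflect_mul_pow (RingHom.id ℂ) z⁻¹ N P hP
  rw [invOf_eq_inv, inv_inv, ← eval, ← eval] at h
  rw [← h, inv_pow]
  field_simp

/-- In `ComplexOrder`, `0 ≤ w` means that `w` is real and nonnegative. -/
def NonnegOnCircle (n : ℕ) (P : ℂ[X]) : Prop :=
  ∀ z : ℂ, ‖z‖ = 1 → 0 ≤ z ^ (-(n : ℤ)) * P.eval z

lemma nonneg_on_circle_of_forall_ne {f : ℂ → ℂ} {ρ : ℂ} (hf : ContinuousAt f ρ)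
    (h : ∀ z, ‖z‖ = 1 → z ≠ ρ → 0 ≤ f z) {z : ℂ} (hz : ‖z‖ = 1) : 0 ≤ f z := by
  rcases ne_or_eq z ρ with hne | rfl
  · exact h z hz hne
  have hlim : Tendsto (fun t : ℝ => z * exp (t * I)) (𝓝[>] 0) (𝓝 z) := by
    have hc : Continuous fun t : ℝ => z * exp (t * I) := by fun_prop
    simpa using (hc.tendsto 0).mono_left nhdsWithin_le_nhds
  refine ge_of_tendsto (hf.tendsto.comp hlim) ?_
  filter_upwards [Ioo_mem_nhdsGT Real.pi_pos] with t ht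
  refine h _ (by simp [hz]) fun heq => (Real.sin_pos_of_pos_of_lt_pi ht.1 ht.2).ne' ?_
  have h1 : exp (t * I) = 1 := by simpa [ne_zero_of_norm_eq_one hz] using heq
  simpa [exp_ofReal_mul_I_im] using congrArg im h1

lemma zpow_neg_succ_mul_eval_X_mul {n : ℕ} {z : ℂ} (hz : z ≠ 0) (Q : ℂ[X]) :
    z ^ (-(n + 1 : ℕ) : ℤ) * (X * Q).eval z = z ^ (-(n : ℤ)) * Q.eval z := by
  rw [eval_mul, eval_X, zpow_neg, zpow_neg, zpow_natCast, zpow_natCast, pow_succ]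
  field_simp

-- On the unit circle `conj z = z⁻¹`, so `|z - ρ|² = -conj ρ z⁻¹ (z - ρ)(z - (conj ρ)⁻¹)`.
lemma zpow_neg_succ_mul_eq_normSq_mul {n : ℕ} {ρ z q : ℂ} (hρ0 : ρ ≠ 0) (hz : ‖z‖ = 1) :
    z ^ (-(n + 1 : ℕ) : ℤ) * ((z - ρ) * (z - (conj ρ)⁻¹) * q) =
      normSq (z - ρ) * (z ^ (-(n : ℤ)) * (-(conj ρ)⁻¹ * q)) := by
  have hz0 := ne_zero_of_norm_eq_one hz
  have hρ0' : conj ρ ≠ 0 := by simpa using hρ0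
  rw [← mul_conj, map_sub, ← inv_eq_conj hz, zpow_neg, zpow_neg, zpow_natCast, zpow_natCast]
  field_simp
  ring

lemma exists_eq_mul_conj_of_nonneg {c : ℂ} (hc : 0 ≤ c) : ∃ a : ℂ, c = a * conj a := by
  obtain ⟨hre, him⟩ := nonneg_iff.mp hc
  refine ⟨(√c.re : ℝ), ?_⟩
  rw [conj_ofReal, ← ofReal_mul, Real.mul_self_sqrt hre]
  exact Complex.ext rfl (by simp [him])

namespace NonnegOnCircle

variable {n : ℕ} {P : ℂ[X]}

theorem reflect_eq_map_conj (hP : NonnegOnCircle n P) (hdeg : P.natDegree ≤ 2 * n) :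
    reflect (2 * n) P = P.map conj := by
  refine eq_of_infinite_eval_eq _ _ (infinite_unitCircle.mono fun z (hz : ‖z‖ = 1) => ?_)
  have hz0 := ne_zero_of_norm_eq_one hz
  have hreal : conj (z⁻¹ ^ (-(n : ℤ)) * P.eval z⁻¹) = z⁻¹ ^ (-(n : ℤ)) * P.eval z⁻¹ :=
    (IsSelfAdjoint.of_nonneg (hP z⁻¹ (by simpa using hz))).star_eq
  rw [map_mul, map_zpow₀, map_inv₀, ← inv_eq_conj hz, inv_inv, inv_zpow', neg_neg, zpow_neg,
    zpow_natCast, inv_mul_eq_iff_eq_mul₀ (pow_ne_zero _ hz0)] at hreal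
  change eval z (reflect (2 * n) P) = eval z (P.map conj)
  rw [eval_map_conj, ← inv_eq_conj hz, eval_reflect_eq_pow_mul_eval_inv hdeg hz0, hreal]
  ring

theorem coeff_zero_eq_conj (hP : NonnegOnCircle n P) (hdeg : P.natDegree ≤ 2 * n) :
    P.coeff 0 = conj (P.coeff (2 * n)) := by
  simpa [coeff_reflect] using congrArg (coeff · (2 * n)) (hP.reflect_eq_map_conj hdeg)

theorem natDegree_eq (hP : NonnegOnCircle n P) (hdeg : P.natDegree ≤ 2 * n)
    (h0 : P.coeff 0 ≠ 0) : P.natDegree = 2 * n := by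
  refine hdeg.antisymm (le_natDegree_of_ne_zero fun h => h0 ?_)
  rw [hP.coeff_zero_eq_conj hdeg, h, map_zero]

theorem isRoot_inv_conj (hP : NonnegOnCircle n P) (hdeg : P.natDegree ≤ 2 * n) {ρ : ℂ}
    (hρ : P.IsRoot ρ) (hρ0 : ρ ≠ 0) : P.IsRoot (conj ρ)⁻¹ := by
  have hρ0' : conj ρ ≠ 0 := by simpa using hρ0
  have h := eval_reflect_eq_pow_mul_eval_inv hdeg hρ0'
  rw [hP.reflect_eq_map_conj hdeg, eval_map_conj, conj_conj, hρ.eq_zero, map_zero] at h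
  exact (mul_eq_zero.mp h.symm).resolve_left (pow_ne_zero _ hρ0')

/-- A root `e^{iθ₀}` of `P` on the circle is a zero of `F(θ) = e^{-inθ} P(e^{iθ}) ≥ 0`, so
`F'(θ₀) = e^{-inθ₀} P'(e^{iθ₀}) i e^{iθ₀}` vanishes. -/
theorem isRoot_derivative (hP : NonnegOnCircle n P) {ρ : ℂ} (hρ : ‖ρ‖ = 1)
    (hroot : P.IsRoot ρ) : P.derivative.IsRoot ρ := by
  have hρ0 := ne_zero_of_norm_eq_one hρ
  obtain ⟨θ₀, rfl⟩ := exists_exp_mul_I_eq hρ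
  set ρ := exp (θ₀ * I)
  set F : ℂ → ℂ := fun w => exp (w * I) ^ (-(n : ℤ)) * P.eval (exp (w * I))
  set D := ρ ^ (-(n : ℤ)) * (P.derivative.eval ρ * (ρ * I))
  have he : HasDerivAt (fun w : ℂ => exp (w * I)) (ρ * I) θ₀ := by
    simpa using ((hasDerivAt_id (θ₀ : ℂ)).mul_const I).cexp
  have hF : HasDerivAt F D θ₀ := by
    have hu := (hasDerivAt_zpow (-(n : ℤ)) ρ (Or.inl hρ0)).comp (θ₀ : ℂ) he
    have hv := (P.hasDerivAt ρ).comp (θ₀ : ℂ) he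
    refine (hu.mul hv).congr_deriv ?_
    change _ * P.eval ρ + ρ ^ (-(n : ℤ)) * _ = D
    rw [hroot.eq_zero, mul_zero, zero_add]
  have hnonneg : ∀ θ : ℝ, 0 ≤ F θ := fun θ => hP _ (norm_exp_ofReal_mul_I θ)
  have hF0 : F θ₀ = 0 := by
    change ρ ^ (-(n : ℤ)) * P.eval ρ = 0
    rw [hroot.eq_zero, mul_zero]
  have hre : D.re = 0 := by
    refine IsLocalMin.hasDerivAt_eq_zero (Filter.Eventually.of_forall fun θ => ?_)
      hF.real_of_complex
    rw [hF0, zero_re]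
    exact (nonneg_iff.mp (hnonneg θ)).1
  have him : D.im = 0 := by
    have h := (hF.const_mul (-I)).real_of_complex
    have hconst : (fun θ : ℝ => (-I * F θ).re) = fun _ => 0 :=
      funext fun θ => by simp [(nonneg_iff.mp (hnonneg θ)).2.symm]
    rw [hconst] at h
    simpa using h.unique (hasDerivAt_const _ _)
  have hD : D = 0 := Complex.ext hre him
  simpa [D, I_ne_zero, hρ0] using hD

theorem X_sub_C_mul_X_sub_C_inv_conj_dvd (hP : NonnegOnCircle n P) (hdeg : P.natDegree ≤ 2 * n)
    {ρ : ℂ} (hroot : P.IsRoot ρ) (hρ0 : ρ ≠ 0) : (X - C ρ) * (X - C (conj ρ)⁻¹) ∣ P := by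
  by_cases hρ : ‖ρ‖ = 1
  · rw [← inv_eq_conj hρ, inv_inv, ← sq]
    rcases eq_or_ne P 0 with rfl | hP0
    · exact dvd_zero _
    · exact (le_rootMultiplicity_iff hP0).mp <| (one_lt_rootMultiplicity_iff_isRoot hP0).mpr
        ⟨hroot, hP.isRoot_derivative hρ hroot⟩
  · have hne : ρ ≠ (conj ρ)⁻¹ := fun h => hρ <| by
      have h' := congrArg norm h
      rw [norm_inv, norm_conj] at h'
      field_simp at h'
      nlinarith [norm_nonneg ρ]
    exact (isCoprime_X_sub_C_of_isUnit_sub (sub_ne_zero.mpr hne).isUnit).mul_dvd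
      (dvd_iff_isRoot.mpr hroot) (dvd_iff_isRoot.mpr (hP.isRoot_inv_conj hdeg hroot hρ0))

theorem of_X_mul {Q : ℂ[X]} (hP : NonnegOnCircle (n + 1) (X * Q)) : NonnegOnCircle n Q :=
  fun z hz => zpow_neg_succ_mul_eval_X_mul (ne_zero_of_norm_eq_one hz) Q ▸ hP z hz

theorem natDegree_le_of_X_mul {Q : ℂ[X]} (hP : NonnegOnCircle (n + 1) (X * Q))
    (hdeg : (X * Q).natDegree ≤ 2 * (n + 1)) : Q.natDegree ≤ 2 * n := by
  rcases eq_or_ne Q 0 with rfl | hQ0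
  · simp
  have htop := hP.coeff_zero_eq_conj hdeg
  rw [coeff_X_mul_zero, eq_comm, map_eq_zero, show 2 * (n + 1) = 2 * n + 1 + 1 by ring,
    coeff_X_mul] at htop
  rw [natDegree_X_mul hQ0] at hdeg
  simpa using natDegree_le_pred (n := 2 * n + 1) (by omega) htop

theorem of_X_sub_C_mul_X_sub_C_inv_conj_mul {ρ : ℂ} {Q : ℂ[X]} (hρ0 : ρ ≠ 0)
    (hP : NonnegOnCircle (n + 1) ((X - C ρ) * (X - C (conj ρ)⁻¹) * Q)) :
    NonnegOnCircle n (C (-(conj ρ)⁻¹) * Q) := by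
  refine fun z hz => nonneg_on_circle_of_forall_ne (ρ := ρ)
    (f := fun z => z ^ (-(n : ℤ)) * (C (-(conj ρ)⁻¹) * Q).eval z) ?_ (fun z hz hne => ?_) hz
  · exact (continuousAt_zpow₀ ρ _ (Or.inl hρ0)).mul (Polynomial.continuousAt _)
  · have hpos : (0 : ℂ) < normSq (z - ρ) :=
      zero_lt_real.mpr (normSq_pos.mpr (sub_ne_zero.mpr hne))
    have h := hP z hz
    simp only [eval_mul, eval_sub, eval_X, eval_C] at h ⊢
    rw [zpow_neg_succ_mul_eq_normSq_mul hρ0 hz] at h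
    exact le_of_mul_le_mul_left (by rwa [mul_zero]) hpos

theorem exists_eq_mul_conj (hP : NonnegOnCircle n P) (hdeg : P.natDegree ≤ 2 * n) :
    ∃ w : ℂ[X], w.natDegree ≤ n ∧
      ∀ z : ℂ, ‖z‖ = 1 → z ^ (-(n : ℤ)) * P.eval z = w.eval z * conj (w.eval z) := by
  induction n generalizing P with
  | zero =>
    obtain ⟨c, rfl⟩ : ∃ c, P = C c := ⟨_, eq_C_of_natDegree_le_zero hdeg⟩
    obtain ⟨a, ha⟩ := exists_eq_mul_conj_of_nonneg (by simpa using hP 1 (by simp))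
    exact ⟨C a, by simp, fun z _ => by simpa using ha⟩
  | succ n ih =>
    by_cases h0 : P.coeff 0 = 0
    · obtain ⟨Q, rfl⟩ := X_dvd_iff.mpr h0
      obtain ⟨w, hw, hwz⟩ := ih hP.of_X_mul (hP.natDegree_le_of_X_mul hdeg)
      refine ⟨w, hw.trans n.le_succ, fun z hz => ?_⟩
      rw [zpow_neg_succ_mul_eval_X_mul (ne_zero_of_norm_eq_one hz), hwz z hz]
    have hdeg' := hP.natDegree_eq hdeg h0
    obtain ⟨ρ, hρ⟩ := IsAlgClosed.exists_root P (natDegree_pos_iff_degree_pos.mp (by omega)).ne'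
    have hρ0 : ρ ≠ 0 := by
      rintro rfl
      exact h0 (by rw [coeff_zero_eq_eval_zero, hρ.eq_zero])
    obtain ⟨Q, rfl⟩ := hP.X_sub_C_mul_X_sub_C_inv_conj_dvd hdeg hρ hρ0
    have hQdeg : (C (-(conj ρ)⁻¹) * Q).natDegree ≤ 2 * n := by
      have hQ0 : Q ≠ 0 := by rintro rfl; simp at h0
      rw [natDegree_mul (mul_ne_zero (X_sub_C_ne_zero _) (X_sub_C_ne_zero _)) hQ0,
        natDegree_mul (X_sub_C_ne_zero _) (X_sub_C_ne_zero _), natDegree_X_sub_C,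
        natDegree_X_sub_C] at hdeg'
      exact (natDegree_C_mul_le _ _).trans (by omega)
    obtain ⟨w, hw, hwz⟩ := ih (hP.of_X_sub_C_mul_X_sub_C_inv_conj_mul hρ0) hQdeg
    refine ⟨(X - C ρ) * w, natDegree_mul_le.trans (by rw [natDegree_X_sub_C]; omega),
      fun z hz => ?_⟩
    calc z ^ (-(n + 1 : ℕ) : ℤ) * ((X - C ρ) * (X - C (conj ρ)⁻¹) * Q).eval z
        = normSq (z - ρ) * (z ^ (-(n : ℤ)) * (C (-(conj ρ)⁻¹) * Q).eval z) := by
          simp only [eval_mul, eval_sub, eval_X, eval_C]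
          exact zpow_neg_succ_mul_eq_normSq_mul hρ0 hz
      _ = ((X - C ρ) * w).eval z * conj (((X - C ρ) * w).eval z) := by
          rw [hwz z hz, ← mul_conj]
          simp only [eval_mul, eval_sub, eval_X, eval_C, map_mul]
          ring

end NonnegOnCircle

theorem fejer_riesz_general (n : ℕ) (r : ℤ → ℂ)
    (hreal : ∀ θ : ℝ,
      (∑ k ∈ Finset.Icc (-(n : ℤ)) (n : ℤ), r k * Complex.exp (θ * Complex.I) ^ k).im = 0)
    (hnonneg : ∀ θ : ℝ,
      0 ≤ (∑ k ∈ Finset.Icc (-(n : ℤ)) (n : ℤ), r k * Complex.exp (θ * Complex.I) ^ k).re) :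
    ∃ w : Polynomial ℂ, w.natDegree ≤ n ∧
      ∀ z : ℂ, ‖z‖ = 1 →
        ∑ k ∈ Finset.Icc (-(n : ℤ)) (n : ℤ), r k * z ^ k =
          w.eval z * (starRingEnd ℂ) (w.eval z) := by
  have hsum : ∀ z : ℂ, ‖z‖ = 1 →
      ∑ k ∈ Icc (-(n : ℤ)) n, r k * z ^ k = z ^ (-(n : ℤ)) * (shiftedPoly n r).eval z :=
    fun z hz => sum_Icc_mul_zpow_eq_eval_shiftedPoly n r (ne_zero_of_norm_eq_one hz)
  have hP : NonnegOnCircle n (shiftedPoly n r) := by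
    intro z hz
    obtain ⟨θ, rfl⟩ := exists_exp_mul_I_eq hz
    rw [← hsum _ hz]
    exact nonneg_iff.mpr ⟨hnonneg θ, (hreal θ).symm⟩
  obtain ⟨w, hw, hwz⟩ := hP.exists_eq_mul_conj (natDegree_shiftedPoly_le n r)
  exact ⟨w, hw, fun z hz => (hsum z hz).trans (hwz z hz)⟩

theorem fejer_riesz (n : ℕ) (r : ℤ → ℂ)
    (hsupp : ∀ k : ℤ, n < |k| → r k = 0)
    (hreal : ∀ θ : ℝ,
      (∑ k ∈ Finset.Icc (-(n : ℤ)) (n : ℤ), r k * Complex.exp (θ * Complex.I) ^ k).im = 0)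
    (hnonneg : ∀ θ : ℝ,
      0 ≤ (∑ k ∈ Finset.Icc (-(n : ℤ)) (n : ℤ), r k * Complex.exp (θ * Complex.I) ^ k).re) :
    ∃ w : Polynomial ℂ, w.natDegree ≤ n ∧
      ∀ z : ℂ, ‖z‖ = 1 →
        ∑ k ∈ Finset.Icc (-(n : ℤ)) (n : ℤ), r k * z ^ k =
          w.eval z * (starRingEnd ℂ) (w.eval z) :=
  fejer_riesz_general n r hreal hnonneg
end
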